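/- The algebra WMQSym of weak multi-quasisymmetric functions, spanned by the monomial functions M_w with w ∈ W[m]×, is a Hopf subalgebra of ÑQSym[m]: it is closed under the deconcatenation coproduct, the counit, and the antipode. -/

import Mathlib

/-- `Ñ = ℕ ⊔ {ε}` modelled as `Option ℕ` (`none = ε`), with its addition. -/
def nadd : Option ℕ → Option ℕ → Option ℕ
  | none, none => none
  | none, some n => if n = 0 then none else some n
  | some n, none => if n = 0 then none else some n
  | some a, some b => some (a + b)

/-- The quasi-shuffle product of two words over an alphabet `C` with a binary
operation `op`, with values in the free `k`-module on words. -/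
noncomputable def qsh {k : Type*} [CommRing k] {C : Type*} (op : C → C → C) :
    List C → List C → (List C →₀ k)
  | [], y => Finsupp.single y 1
  | x, [] => Finsupp.single x 1
  | a :: x, b :: y =>
      (qsh op x (b :: y)).mapDomain (a :: ·) + (qsh op (a :: x) y).mapDomain (b :: ·) +
        (qsh op x y).mapDomain (op a b :: ·)
  termination_by x y => x.length + y.length
  decreasing_by all_goals simp [List.length_cons] <;> omega

/-- Compositions of `n`: lists of positive integers with sum `n`. -/
def Comps (n : ℕ) : Set (List ℕ) := {L | (∀ l ∈ L, 0 < l) ∧ L.sum = n}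

/-- `L ∘ 𝐛`: merge consecutive blocks of `𝐛` of sizes given by `L`, combining
the entries of each block with `op` (with neutral element `z`). -/
def blocksOf {C : Type*} (op : C → C → C) (z : C) : List ℕ → List C → List C
  | [], _ => []
  | l :: L, b => ((b.take l).foldr op z) :: blocksOf op z L (b.drop l)

/-- A multi-composition with exponents in `Ñ` is *weak* when every column takes
values in `P̃ = P ⊔ {ε}`, i.e. never takes the value `0 = some 0`. -/
def Weak {m : ℕ} (w : List (Fin m → Option ℕ)) : Prop :=
  ∀ c ∈ w, ∀ i, c i ≠ some 0

/-! Every letter produced by the product, the coproduct or the antipode is either a letter of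
the input or a combination `op a b` whose left factor `a` is a letter of the input; for the
antipode this is because `L` is a composition, so every block of `L ∘ w^r` is nonempty.
In `Ñ`, `nadd a b = 0` forces `a = 0`, so a letter without zero entries keeps this property
when combined on the left with any letter. -/

theorem Finsupp.exists_of_mem_support_mapDomain {α β M : Type*} [AddCommMonoid M]
    {f : α → β} {s : α →₀ M} {b : β} (h : b ∈ (s.mapDomain f).support) :
    ∃ a ∈ s.support, f a = b := by
  classical
  exact Finset.mem_image.mp (Finsupp.mapDomain_support h)

section LetterPredicate

variable {C : Type*} {p : C → Prop} {op : C → C → C}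

theorem forall_mem_of_mem_support_qsh {k : Type*} [CommRing k]
    (hop : ∀ a b, p a → p b → p (op a b)) (x y : List C)
    (hx : ∀ c ∈ x, p c) (hy : ∀ c ∈ y, p c) :
    ∀ z ∈ (qsh (k := k) op x y).support, ∀ c ∈ z, p c := by
  classical
  induction x, y using qsh.induct with
  | case1 y =>
    intro z hz
    rw [qsh.eq_1] at hz
    exact Finset.mem_singleton.mp (Finsupp.support_single_subset hz) ▸ hy
  | case2 x hx_ne =>
    intro z hz
    rw [qsh.eq_2 _ _ hx_ne] at hz
    exact Finset.mem_singleton.mp (Finsupp.support_single_subset hz) ▸ hx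
  | case3 a x b y ih_left ih_right ih_both =>
    obtain ⟨ha, hx'⟩ := List.forall_mem_cons.mp hx
    obtain ⟨hb, hy'⟩ := List.forall_mem_cons.mp hy
    intro z hz
    rw [qsh.eq_3] at hz
    rcases Finset.mem_union.mp (Finsupp.support_add hz) with hz | hz
    · rcases Finset.mem_union.mp (Finsupp.support_add hz) with hz | hz
      · obtain ⟨w, hw, rfl⟩ := Finsupp.exists_of_mem_support_mapDomain hz
        exact List.forall_mem_cons.mpr ⟨ha, ih_left hx' hy w hw⟩
      · obtain ⟨w, hw, rfl⟩ := Finsupp.exists_of_mem_support_mapDomain hz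
        exact List.forall_mem_cons.mpr ⟨hb, ih_right hx hy' w hw⟩
    · obtain ⟨w, hw, rfl⟩ := Finsupp.exists_of_mem_support_mapDomain hz
      exact List.forall_mem_cons.mpr ⟨hop a b ha hb, ih_both hx' hy' w hw⟩

theorem forall_mem_blocksOf (hop : ∀ a b, p a → p (op a b)) (z : C) :
    ∀ (L : List ℕ) (b : List C), (∀ l ∈ L, 0 < l) → L.sum ≤ b.length → (∀ c ∈ b, p c) →
      ∀ c ∈ blocksOf op z L b, p c
  | [], _, _, _, _ => by simp [blocksOf]
  | l :: L, b, hL, hsum, hb => by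
    obtain ⟨hl, hL⟩ := List.forall_mem_cons.mp hL
    rw [List.sum_cons] at hsum
    refine List.forall_mem_cons.mpr ⟨?_, forall_mem_blocksOf hop z L (b.drop l) hL
      (by rw [List.length_drop]; omega) fun c hc => hb c (List.mem_of_mem_drop hc)⟩
    obtain ⟨c, t, hct⟩ := List.exists_cons_of_ne_nil (l := b.take l)
      (by rw [Ne, List.take_eq_nil_iff]; grind)
    rw [hct]
    exact hop c _ (hb c (List.mem_of_mem_take (hct ▸ List.mem_cons_self)))

end LetterPredicate

theorem nadd_ne_some_zero_of_left {a : Option ℕ} (b : Option ℕ) (ha : a ≠ some 0) :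
    nadd a b ≠ some 0 := by
  cases a <;> cases b <;> simp_all [nadd]

theorem Weak.of_subset {m : ℕ} {x y : List (Fin m → Option ℕ)} (h : y ⊆ x) (hx : Weak x) :
    Weak y :=
  fun c hc => hx c (h hc)

/-- the algebra `WMQSym` of weak multi-quasisymmetric functions,
spanned by the `M_w` with `w ∈ W[m]ˣ` (weak multi-compositions), is a Hopf
subalgebra of `ÑQSym[m]`: it is closed under the quasi-shuffle product, under
the deconcatenation coproduct `Δ(M_w) = ∑ M_{(w_1,…,w_i)} ⊗ M_{(w_{i+1},…,w_n)}`,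
under the counit, and under the antipode
`S(M_w) = (−1)^{ℓ(w)} ∑_{L⊨ℓ(w)} M_{L∘w^r}` (all words appearing in these
expansions are again weak). -/
theorem stmt15 {k : Type*} [CommRing k] (m : ℕ) :
    (∀ x y : List (Fin m → Option ℕ), Weak x → Weak y →
      ∀ z ∈ (qsh (k := k) (fun a b i => nadd (a i) (b i)) x y).support, Weak z) ∧
    (∀ x : List (Fin m → Option ℕ), Weak x →
      ∀ i : ℕ, Weak (x.take i) ∧ Weak (x.drop i)) ∧
    (∀ x : List (Fin m → Option ℕ), Weak x →
      ∀ L ∈ Comps x.length,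
        Weak (blocksOf (fun a b i => nadd (a i) (b i)) (fun _ => some 0)
          L x.reverse)) := by
  have hop (a b : Fin m → Option ℕ) (ha : ∀ i, a i ≠ some 0) (i : Fin m) :
      nadd (a i) (b i) ≠ some 0 :=
    nadd_ne_some_zero_of_left _ (ha i)
  refine ⟨fun x y hx hy => forall_mem_of_mem_support_qsh (fun a b ha _ => hop a b ha) x y hx hy,
    fun x hx i => ⟨hx.of_subset (List.take_subset i x), hx.of_subset (List.drop_subset i x)⟩,
    fun x hx L hL => ?_⟩
  exact forall_mem_blocksOf hop _ L x.reverse hL.1 (by rw [hL.2, List.length_reverse])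
    (hx.of_subset fun c => List.mem_reverse.mp)
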